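/- arXiv:math/9812047 — 4 statements merged into one kernel-verified Lean document; each statement's English description precedes it below -/
import Mathlib

section
/- Let p be an odd prime, n ≥ 1, u a unit modulo p, and 1 ≤ k ≤ n. The congruence y² ≡ u·p^k (mod p^n) has a solution y ∈ Z/p^nZ if and only if either k = n, or k is even and u is a quadratic residue modulo p. -/
/-!
If `p ^ (k + 1) ∣ y ^ 2 - u * p ^ k` with `p ∤ u` and `k ≥ 1`, then `p ∣ y`; writing
`y = p * y'` and cancelling `p ^ 2` lowers `k` by two, while `k = 1` would force `p ∣ u`.
Descending to `k = 0` shows that `k` is even and `u` is a square mod `p`. Conversely, a square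
root of `u` mod `p` is a simple root of `X ^ 2 - u` because `p` is odd, so it lifts to a square
root `x` of `u` in `ℤ_[p]` by Hensel's lemma, and `(x * p ^ (k / 2)) ^ 2 = u * p ^ k` modulo
`p ^ n`.
-/

open Polynomial

theorem Prime.dvd_of_pow_dvd_sq_sub_mul_pow {R : Type*} [CommRing R] {p u y : R} (hp : Prime p)
    {j k : ℕ} (hj : j ≠ 0) (hk : k ≠ 0) (h : p ^ j ∣ y ^ 2 - u * p ^ k) : p ∣ y :=
  hp.dvd_of_dvd_pow (n := 2) <|
    (dvd_sub_left (dvd_mul_of_dvd_right (dvd_pow_self p hk) u)).mp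
      ((dvd_pow_self p hj).trans h)

theorem Prime.even_and_exists_sq_dvd_sub_of_pow_succ_dvd {R : Type*} [CommRing R]
    [IsDomain R] {p u : R} (hp : Prime p) (hu : ¬ p ∣ u) :
    ∀ {k : ℕ} {y : R}, p ^ (k + 1) ∣ y ^ 2 - u * p ^ k → Even k ∧ ∃ w : R, p ∣ w ^ 2 - u
  | 0, y, h => ⟨Even.zero, y, by simpa using h⟩
  | 1, y, h => by
    obtain ⟨y, rfl⟩ := hp.dvd_of_pow_dvd_sq_sub_mul_pow two_ne_zero one_ne_zero h
    have : p ^ 2 ∣ u * p :=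
      (dvd_sub_right (pow_dvd_pow_of_dvd (dvd_mul_right p y) 2)).mp (by rwa [pow_one] at h)
    rw [sq] at this
    exact absurd ((mul_dvd_mul_iff_right hp.ne_zero).mp this) hu
  | k + 2, y, h => by
    obtain ⟨y, rfl⟩ :=
      hp.dvd_of_pow_dvd_sq_sub_mul_pow (k + 2).succ_ne_zero k.succ.succ_ne_zero h
    have h' : p ^ 2 * p ^ (k + 1) ∣ p ^ 2 * (y ^ 2 - u * p ^ k) := by
      convert h using 1 <;> ring
    obtain ⟨hk, hw⟩ := hp.even_and_exists_sq_dvd_sub_of_pow_succ_dvd hu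
      ((mul_dvd_mul_iff_left (pow_ne_zero 2 hp.ne_zero)).mp h')
    exact ⟨hk.add even_two, hw⟩

namespace PadicInt

variable {p : ℕ} [Fact p.Prime]

theorem norm_intCast_eq_one_of_not_dvd {k : ℤ} (hk : ¬ (p : ℤ) ∣ k) :
    ‖(k : ℤ_[p])‖ = 1 :=
  le_antisymm (norm_le_one _) (not_lt.mp ((norm_int_lt_one_iff_dvd k).not.mpr hk))

theorem exists_sq_eq_of_norm_sq_sub_lt_one (hp2 : p ≠ 2) {u a : ℤ_[p]} (ha : ‖a‖ = 1)
    (h : ‖a ^ 2 - u‖ < 1) : ∃ x : ℤ_[p], x ^ 2 = u := by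
  have h2 : ‖(2 : ℤ_[p])‖ = 1 := by
    have : ¬ (p : ℤ) ∣ 2 := by
      exact_mod_cast (Nat.prime_dvd_prime_iff_eq Fact.out Nat.prime_two).not.mpr hp2
    exact_mod_cast norm_intCast_eq_one_of_not_dvd this
  obtain ⟨x, hx, -⟩ := hensels_lemma (F := X ^ 2 - C u) (a := a)
    (by simpa [one_add_one_eq_two, h2, ha] using h)
  exact ⟨x, by simpa [sub_eq_zero] using hx⟩

theorem exists_sq_eq_intCast_of_sq_eq (hp2 : p ≠ 2) {u : ℤ} (hu : ¬ (p : ℤ) ∣ u)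
    {z : ZMod p} (hz : z ^ 2 = u) : ∃ x : ℤ_[p], x ^ 2 = u := by
  have ha : (p : ℤ) ∣ (z.cast : ℤ) ^ 2 - u := by
    rw [← ZMod.intCast_eq_intCast_iff_dvd_sub, Int.cast_pow, ZMod.intCast_zmod_cast, hz]
  have hpa : ¬ (p : ℤ) ∣ z.cast :=
    fun hpa => hu ((dvd_sub_right (dvd_pow hpa two_ne_zero)).mp ha)
  exact exists_sq_eq_of_norm_sq_sub_lt_one hp2 (norm_intCast_eq_one_of_not_dvd hpa)
    (by exact_mod_cast (norm_int_lt_one_iff_dvd _).mpr ha)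

end PadicInt

theorem square_of_unit_times_prime_power_general (p n k : ℕ) (u : ℤ) (hp : p.Prime) (hodd : p ≠ 2)
    (hkn : k ≤ n) (hu : ¬ (p : ℤ) ∣ u) :
    (∃ y : ZMod (p ^ n), y ^ 2 = ((u * (p : ℤ) ^ k : ℤ) : ZMod (p ^ n))) ↔
      k = n ∨ (Even k ∧ ∃ z : ZMod p, z ^ 2 = (u : ZMod p)) := by
  have := Fact.mk hp
  constructor
  · rintro ⟨y, hy⟩
    refine or_iff_not_imp_left.mpr fun hne => ?_
    obtain ⟨y, rfl⟩ := ZMod.intCast_surjective y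
    rw [← Int.cast_pow, ZMod.intCast_eq_intCast_iff_dvd_sub] at hy
    have h : (p : ℤ) ^ (k + 1) ∣ y ^ 2 - u * p ^ k := dvd_sub_comm.mp <|
      (pow_dvd_pow (p : ℤ) (by omega : k + 1 ≤ n)).trans (by exact_mod_cast hy)
    obtain ⟨hk, w, hw⟩ :=
      (Nat.prime_iff_prime_int.mp hp).even_and_exists_sq_dvd_sub_of_pow_succ_dvd hu h
    refine ⟨hk, w, ?_⟩
    rw [← Int.cast_pow, ZMod.intCast_eq_intCast_iff_dvd_sub]
    exact dvd_sub_comm.mp hw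
  · rintro (rfl | ⟨⟨m, rfl⟩, z, hz⟩)
    · refine ⟨0, ?_⟩
      rw [Int.cast_mul, Int.cast_pow, Int.cast_natCast, ← Nat.cast_pow, ZMod.natCast_self]
      ring
    · obtain ⟨x, hx⟩ := PadicInt.exists_sq_eq_intCast_of_sq_eq hodd hu hz
      refine ⟨PadicInt.toZModPow n x * p ^ m, ?_⟩
      rw [mul_pow, ← map_pow, hx, map_intCast]
      push_cast
      ring

theorem square_of_unit_times_prime_power (p n k : ℕ) (u : ℤ) (hp : p.Prime) (hodd : p ≠ 2)
    (hn : 1 ≤ n) (hk1 : 1 ≤ k) (hkn : k ≤ n) (hu : ¬ (p : ℤ) ∣ u) :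
    (∃ y : ZMod (p ^ n), y ^ 2 = ((u * (p : ℤ) ^ k : ℤ) : ZMod (p ^ n))) ↔
      k = n ∨ (Even k ∧ ∃ z : ZMod p, z ^ 2 = (u : ZMod p)) :=
  square_of_unit_times_prime_power_general p n k u hp hodd hkn hu
end

section
/- For any squarefree positive integer q ≥ 2, ∑_{p | q, p prime} p^{-1/2} ≤ C·√(ω(q)/log(ω(q)+2)) for an absolute constant C, where ω(q) is the number of distinct prime divisors of q. -/
/-!
Chebyshev's bound `θ(x) ≤ x log 4`, summed over the dyadic blocks `(2^j, 2^(j+1)]`, gives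
`∑_{p ≤ n} log p / √p = O(√n)`. Primes in `(√n, n]` have `log p ≥ (log n) / 2`, and those up to `√n`
contribute `O(n^(1/4))`, so `∑_{p ≤ n} 1 / √p = O(√n / log n)`.

For `q` with `k = ω(q)` prime factors put `l = log (k + 2)` and cut at `T ≍ k l`: the prime factors
up to `T` contribute `O(√T / log T) = O(√(k / l))`, and the at most `k` prime factors above `T`
contribute at most `k / √T ≤ √(k / l)`.
-/

open Finset Real Chebyshev
open Nat (primesLE)

lemma lt_of_mem_primesLE_sdiff {m n p : ℕ} (hp : p ∈ primesLE n \ primesLE m) : m < p := by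
  obtain ⟨⟨-, hp⟩, hpm⟩ := by simpa only [mem_sdiff, Nat.mem_primesLE] using hp
  exact not_le.1 fun h => hpm ⟨h, hp⟩

lemma sqrt_mul_sum_primesLE_sdiff_log_div_sqrt_le (m n : ℕ) :
    √m * ∑ p ∈ primesLE n \ primesLE m, log p / √p ≤ log 4 * n := by
  calc √m * ∑ p ∈ primesLE n \ primesLE m, log p / √p
      ≤ ∑ p ∈ primesLE n \ primesLE m, log p := by
        rw [mul_sum]
        refine sum_le_sum fun p hp => ?_
        have hmp := lt_of_mem_primesLE_sdiff hp
        rw [mul_div_assoc', div_le_iff₀ (sqrt_pos.2 (by exact_mod_cast m.zero_le.trans_lt hmp)),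
          mul_comm]
        gcongr
    _ ≤ ∑ p ∈ primesLE n, log p :=
        sum_le_sum_of_subset_of_nonneg sdiff_subset fun p _ _ => log_natCast_nonneg p
    _ = θ n := (theta_eq_sum_primesLE_log n).symm
    _ ≤ log 4 * n := theta_le_log4_mul_x n.cast_nonneg

lemma exists_sum_primesLE_two_pow_log_div_sqrt_le :
    ∃ A, 0 ≤ A ∧ ∀ j : ℕ, ∑ p ∈ primesLE (2 ^ j), log p / √p ≤ A * √(2 ^ j) := by
  have hsqrt2 : 0 < √2 - 1 := sub_pos.2 one_lt_sqrt_two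
  set A := 2 * log 4 / (√2 - 1)
  have hA : 0 ≤ A := div_nonneg (by positivity) hsqrt2.le
  have hA_fix : A + 2 * log 4 = A * √2 := by
    simp only [A]
    field_simp
    ring
  refine ⟨A, hA, fun j => ?_⟩
  induction j with
  | zero => simpa using hA
  | succ j ih =>
    have hs : 0 < √(2 ^ j : ℝ) := by positivity
    have hblock : ∑ p ∈ primesLE (2 ^ (j + 1)) \ primesLE (2 ^ j), log p / √p
        ≤ 2 * log 4 * √(2 ^ j) := by
      have h := sqrt_mul_sum_primesLE_sdiff_log_div_sqrt_le (2 ^ j) (2 ^ (j + 1))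
      push_cast at h
      refine le_of_mul_le_mul_left (h.trans_eq ?_) hs
      linear_combination (-2 * log 4) * mul_self_sqrt (pow_nonneg (zero_le_two (α := ℝ)) j)
    rw [← sum_sdiff (Nat.primesLE_mono (Nat.pow_le_pow_right two_pos j.le_succ)),
      pow_succ (2 : ℝ), sqrt_mul' _ zero_le_two]
    calc _ ≤ 2 * log 4 * √(2 ^ j) + A * √(2 ^ j) := add_le_add hblock ih
      _ = A * (√(2 ^ j) * √2) := by linear_combination √(2 ^ j) * hA_fix

lemma exists_sum_primesLE_log_div_sqrt_le :
    ∃ A, 0 ≤ A ∧ ∀ n : ℕ, ∑ p ∈ primesLE n, log p / √p ≤ A * √n := by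
  obtain ⟨A, hA, hdyadic⟩ := exists_sum_primesLE_two_pow_log_div_sqrt_le
  refine ⟨A * √2, by positivity, fun n => ?_⟩
  rcases n.eq_zero_or_pos with rfl | hn
  · simp
  set j := Nat.log 2 n + 1
  have hnj : n ≤ 2 ^ j := (Nat.lt_pow_succ_log_self one_lt_two n).le
  have hjn : (2 ^ j : ℝ) ≤ n * 2 := by
    exact_mod_cast (Nat.pow_succ 2 _).trans_le
      (Nat.mul_le_mul_right 2 (Nat.pow_log_le_self 2 hn.ne'))
  calc ∑ p ∈ primesLE n, log p / √p
      ≤ ∑ p ∈ primesLE (2 ^ j), log p / √p :=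
        sum_le_sum_of_subset_of_nonneg (Nat.primesLE_mono hnj) fun p _ _ => by positivity
    _ ≤ A * √(2 ^ j) := by exact_mod_cast hdyadic j
    _ ≤ A * √(n * 2) := by gcongr
    _ = A * √2 * √n := by rw [sqrt_mul' _ zero_le_two]; ring

lemma sqrt_sqrt_mul_log_le {x : ℝ} (hx : 0 ≤ x) : √(√x) * log x ≤ 4 * √x := by
  have hlog : log x = 4 * log √(√x) := by
    rw [log_sqrt (sqrt_nonneg x), log_sqrt hx]
    ring
  calc √(√x) * log x ≤ √(√x) * (4 * √(√x)) := by
        rw [hlog]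
        gcongr
        exact log_le_self (sqrt_nonneg _)
    _ = 4 * √x := by rw [mul_left_comm, mul_self_sqrt (sqrt_nonneg x)]

lemma one_div_sqrt_le_two_div_log_mul {n p : ℕ} (hn : 1 < n) (hp : Nat.sqrt n < p) :
    1 / √p ≤ 2 / log n * (log p / √p) := by
  have hnp : (n : ℝ) ≤ p ^ 2 := by exact_mod_cast (Nat.sqrt_lt'.1 hp).le
  have hlogp : log n ≤ 2 * log p := by
    calc log n ≤ log (p ^ 2) := log_le_log (by positivity) hnp
      _ = 2 * log p := by rw [log_pow]; norm_num
  have hlogn : 0 < log n := log_pos (by exact_mod_cast hn)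
  calc 1 / √p ≤ 2 * log p / log n * (1 / √p) :=
        le_mul_of_one_le_left (by positivity) ((one_le_div hlogn).2 hlogp)
    _ = 2 / log n * (log p / √p) := by ring

lemma exists_sum_primesLE_inv_sqrt_le :
    ∃ B, 0 ≤ B ∧ ∀ n : ℕ, 2 ≤ n → ∑ p ∈ primesLE n, 1 / √p ≤ B * √n / log n := by
  obtain ⟨A, hA, hH⟩ := exists_sum_primesLE_log_div_sqrt_le
  refine ⟨A * (4 / log 2 + 2), by positivity, fun n hn => ?_⟩
  have hlogn : 0 < log n := log_pos (by exact_mod_cast hn)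
  set m := Nat.sqrt n
  have hsmall : ∑ p ∈ primesLE m, 1 / √p ≤ A * (4 / log 2) * √n / log n := by
    calc ∑ p ∈ primesLE m, 1 / √p ≤ ∑ p ∈ primesLE m, log p / √p / log 2 := by
          refine sum_le_sum fun p hp => ?_
          have hp2 : (2 : ℝ) ≤ p := by exact_mod_cast Nat.two_le_of_mem_primesLE hp
          calc 1 / √p = log 2 / √p / log 2 := by field_simp
            _ ≤ log p / √p / log 2 := by gcongr
      _ ≤ A * √m / log 2 := by
          rw [← sum_div]
          gcongr
          exact hH m
      _ ≤ A * (4 / log 2) * √n / log n := by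
          have hm : √m * log n ≤ 4 * √n :=
            (mul_le_mul_of_nonneg_right (sqrt_le_sqrt nat_sqrt_le_real_sqrt) hlogn.le).trans
              (sqrt_sqrt_mul_log_le n.cast_nonneg)
          rw [div_le_div_iff₀ (log_pos one_lt_two) hlogn]
          calc A * √m * log n = A * (√m * log n) := by ring
            _ ≤ A * (4 * √n) := by gcongr
            _ = A * (4 / log 2) * √n * log 2 := by field_simp
  have hlarge : ∑ p ∈ primesLE n \ primesLE m, 1 / √p ≤ 2 / log n * (A * √n) := by
    calc ∑ p ∈ primesLE n \ primesLE m, 1 / √p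
        ≤ ∑ p ∈ primesLE n \ primesLE m, 2 / log n * (log p / √p) :=
          sum_le_sum fun p hp => one_div_sqrt_le_two_div_log_mul hn (lt_of_mem_primesLE_sdiff hp)
      _ ≤ 2 / log n * ∑ p ∈ primesLE n, log p / √p := by
          rw [← mul_sum]
          gcongr
          exact sdiff_subset
      _ ≤ 2 / log n * (A * √n) := by gcongr; exact hH n
  rw [← sum_sdiff (Nat.primesLE_mono (Nat.sqrt_le_self n))]
  calc _ ≤ 2 / log n * (A * √n) + A * (4 / log 2) * √n / log n := add_le_add hlarge hsmall
    _ = A * (4 / log 2 + 2) * √n / log n := by ring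

lemma sum_inv_sqrt_le_sum_primesLE_add {S : Finset ℕ} (hS : ∀ p ∈ S, p.Prime) {T : ℕ}
    (hT : 0 < T) : ∑ p ∈ S, 1 / √p ≤ ∑ p ∈ primesLE T, 1 / √p + #S / √T := by
  rw [← sum_filter_add_sum_filter_not S (· ≤ T)]
  gcongr ?_ + ?_
  · refine sum_le_sum_of_subset_of_nonneg (fun p hp => ?_) fun _ _ _ => by positivity
    rw [mem_filter] at hp
    exact Nat.mem_primesLE.2 ⟨hp.2, hS p hp.1⟩
  · calc ∑ p ∈ S with ¬p ≤ T, 1 / √p ≤ ∑ p ∈ S with ¬p ≤ T, 1 / √T := by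
          refine sum_le_sum fun p hp => ?_
          have hTp : (T : ℝ) ≤ p := by exact_mod_cast (not_le.1 (mem_filter.1 hp).2).le
          gcongr
      _ = #{p ∈ S | ¬p ≤ T} / √T := by rw [sum_const, nsmul_eq_mul, mul_one_div]
      _ ≤ #S / √T := by
          gcongr
          exact filter_subset _ S

lemma exists_nat_near_mul_log {k : ℕ} (hk : 1 ≤ k) :
    ∃ T : ℕ, 2 ≤ T ∧ k * log (k + 2) ≤ T ∧ (T : ℝ) ≤ 4 * (k * log (k + 2)) ∧
      log (k + 2) ≤ log T := by
  have hk' : (1 : ℝ) ≤ k := by exact_mod_cast hk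
  set l := log (k + 2)
  have hl : 1 ≤ l := by
    rw [le_log_iff_exp_le (by positivity)]
    linarith [exp_one_lt_three]
  have hT := Nat.le_ceil (((k : ℝ) + 2) * l)
  refine ⟨⌈((k : ℝ) + 2) * l⌉₊, ?_, ?_, ?_, ?_⟩
  · exact_mod_cast (show (2 : ℝ) ≤ ⌈((k : ℝ) + 2) * l⌉₊ by nlinarith)
  · nlinarith
  · nlinarith [Nat.ceil_lt_add_one (by positivity : 0 ≤ ((k : ℝ) + 2) * l)]
  · exact log_le_log (by positivity) (by nlinarith)

theorem sum_inv_sqrt_primes_dividing :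
    ∃ C : ℝ, 0 < C ∧ ∀ q : ℕ, Squarefree q → 2 ≤ q →
      ∑ p ∈ q.primeFactors, (1 / Real.sqrt (p : ℝ)) ≤
        C * Real.sqrt ((q.primeFactors.card : ℝ) /
          Real.log ((q.primeFactors.card : ℝ) + 2)) := by
  obtain ⟨B, hB, hG⟩ := exists_sum_primesLE_inv_sqrt_le
  refine ⟨2 * B + 1, by positivity, fun q _ hq => ?_⟩
  set k := #q.primeFactors
  have hk : 1 ≤ k := card_pos.2 (Nat.nonempty_primeFactors.2 (by omega))
  obtain ⟨T, hT2, hkT, hTk, hlT⟩ := exists_nat_near_mul_log hk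
  set l := log (k + 2)
  have hk0 : (0 : ℝ) < k := by exact_mod_cast hk
  have hl : 0 < l := log_pos (by linarith)
  calc ∑ p ∈ q.primeFactors, 1 / √p ≤ ∑ p ∈ primesLE T, 1 / √p + k / √T :=
        sum_inv_sqrt_le_sum_primesLE_add (fun p => Nat.prime_of_mem_primeFactors) (by omega)
    _ ≤ B * √T / log T + k / √T := by gcongr; exact hG T hT2
    _ ≤ B * √(4 * (k * l)) / l + k / √(k * l) := by gcongr
    _ = (2 * B + 1) * √(k / l) := by
        rw [sqrt_mul zero_le_four, sqrt_mul hk0.le, sqrt_div hk0.le, show √(4 : ℝ) = 2 by norm_num]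
        field_simp
        rw [sq_sqrt hk0.le, sq_sqrt hl.le]
        ring
end

section
/- Fix K₁ > 0. There exists a constant C > 0 such that for every squarefree positive integer q, ∑_{c | q, ω(c) ≥ √ω(q)} K₁^{ω(c)}·c^{-1/2} ≤ C·exp(−C⁻¹·√ω(q)), where the sum is over divisors c of q with at least √ω(q) prime factors. -/
/-!
Rankin's trick: a divisor `c` with `ω(c) ≥ k` contributes at most `e^{ω(c) - k}` times its own
term, so the sum is at most `e^{-k} ∏_{p ∣ q} (1 + e K₁ / √p) ≤ e^{-k} exp (e K₁ ∑_{p ∣ q} 1 / √p)`.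
Since the primes have density zero (Chebyshev), the `r`-th smallest prime factor of `q` is
eventually larger than any fixed multiple of `r`, whence `∑_{p ∣ q} 1 / √p = o(√ω(q))`. With
`k = √ω(q)` this leaves `e^{-k/2}` up to a constant factor.
-/

open Finset Real Filter

theorem eventually_primeCounting_le_mul {η : ℝ} (hη : 0 < η) :
    ∀ᶠ n : ℕ in atTop, (n.primeCounting : ℝ) ≤ η * n := by
  have hcheb :=
    tendsto_natCast_atTop_atTop.eventually (Chebyshev.eventually_primeCounting_le one_pos)
  have hlog : ∀ᶠ n : ℕ in atTop, (log 4 + 1) / η ≤ log n :=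
    (tendsto_log_atTop.comp tendsto_natCast_atTop_atTop).eventually_ge_atTop _
  filter_upwards [hcheb, hlog, eventually_gt_atTop 1] with n hcheb hlog hn
  rw [Nat.floor_natCast] at hcheb
  have hlog_pos : 0 < log n := log_pos (by exact_mod_cast hn)
  rw [div_le_iff₀ hη] at hlog
  calc (n.primeCounting : ℝ) ≤ (log 4 + 1) * n / log n := hcheb
    _ ≤ η * n := by
      rw [div_le_iff₀ hlog_pos]
      nlinarith [(Nat.cast_nonneg n : (0:ℝ) ≤ n)]

theorem exists_primeCounting_le_mul_add {η : ℝ} (hη : 0 < η) :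
    ∃ M : ℕ, ∀ n : ℕ, (n.primeCounting : ℝ) ≤ η * n + M := by
  obtain ⟨N, hN⟩ := (eventually_primeCounting_le_mul hη).exists_forall_of_atTop
  refine ⟨N.primeCounting, fun n ↦ ?_⟩
  rcases le_total N n with h | h
  · linarith [hN n h, (Nat.cast_nonneg _ : (0:ℝ) ≤ N.primeCounting)]
  · have : (n.primeCounting : ℝ) ≤ N.primeCounting := by
      exact_mod_cast Nat.monotone_primeCounting h
    linarith [mul_nonneg hη.le (Nat.cast_nonneg (α := ℝ) n)]

theorem sum_apply_card_filter_le {α M : Type*} [LinearOrder α] [AddCommMonoid M]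
    (s : Finset α) (g : ℕ → M) :
    ∑ x ∈ s, g #{y ∈ s | y ≤ x} = ∑ j ∈ range #s, g (j + 1) := by
  induction s using Finset.induction_on_max with
  | empty => simp
  | insert a s ha ih =>
    have has : a ∉ s := fun h ↦ lt_irrefl a (ha a h)
    rw [sum_insert has, card_insert_of_notMem has, sum_range_succ, ← ih, add_comm]
    congr 1
    · refine sum_congr rfl fun x hx ↦ ?_
      rw [filter_insert, if_neg (ha x hx).not_ge]
    · rw [filter_insert, if_pos le_rfl, card_insert_of_notMem (by simp [has]),
        filter_true_of_mem fun y hy ↦ (ha y hy).le]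

theorem sum_range_inv_sqrt_succ_le (n : ℕ) : ∑ j ∈ range n, 1 / √(j + 1) ≤ 2 * √n := by
  induction n with
  | zero => simp
  | succ n ih =>
    rw [sum_range_succ, Nat.cast_succ]
    have hpos : 0 < √((n : ℝ) + 1) := sqrt_pos.mpr (by positivity)
    have hsq : √((n : ℝ) + 1) ^ 2 = n + 1 := sq_sqrt (by positivity)
    have hsqn : √(n : ℝ) ^ 2 = n := sq_sqrt (by positivity)
    have key : 1 / √((n : ℝ) + 1) ≤ 2 * √((n : ℝ) + 1) - 2 * √n := by
      rw [div_le_iff₀ hpos]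
      nlinarith [sq_nonneg (√(n : ℝ) - √((n : ℝ) + 1))]
    linarith

theorem card_filter_le_le_primeCounting {P : Finset ℕ} (hP : ∀ p ∈ P, p.Prime) (x : ℕ) :
    #{p ∈ P | p ≤ x} ≤ x.primeCounting := by
  rw [← Nat.primesLE_card_eq_primeCounting]
  exact card_le_card fun p hp ↦ by
    rw [mem_filter] at hp
    exact Nat.mem_primesLE.mpr ⟨hp.2, hP p hp.1⟩

/-- With `δ = ε² / 8`, the `r`-th smallest element `p` of `P` satisfies `r ≤ π(p) ≤ δ p + M`,
so `1/√p ≤ √(2δ/r) = ε / (2√r)` once `r > 2M`. -/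
theorem exists_sum_inv_sqrt_prime_le {ε : ℝ} (hε : 0 < ε) :
    ∃ C : ℝ, 0 ≤ C ∧ ∀ P : Finset ℕ, (∀ p ∈ P, p.Prime) →
      ∑ p ∈ P, 1 / √p ≤ ε * √(#P : ℝ) + C := by
  obtain ⟨M, hM⟩ := exists_primeCounting_le_mul_add (η := ε ^ 2 / 8) (by positivity)
  refine ⟨2 * M, by positivity, fun P hP ↦ ?_⟩
  let g : ℕ → ℝ := fun r ↦ (if r ≤ 2 * M then 1 else 0) + ε / 2 * (1 / √r)
  have hterm : ∀ p ∈ P, 1 / √p ≤ g #{q ∈ P | q ≤ p} := by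
    intro p hp
    set r := #{q ∈ P | q ≤ p}
    have hp1 : (1 : ℝ) ≤ p := by exact_mod_cast (hP p hp).one_lt.le
    have hr : (r : ℝ) ≤ ε ^ 2 / 8 * p + M :=
      (Nat.cast_le.mpr (card_filter_le_le_primeCounting hP p)).trans (hM p)
    simp only [g]
    split_ifs with hrM
    · have : 1 / √p ≤ 1 := div_le_one_of_le₀ (one_le_sqrt.mpr hp1) (sqrt_nonneg _)
      have : 0 ≤ ε / 2 * (1 / √r) := by positivity
      linarith
    · rw [not_le] at hrM
      have hr2 : (r : ℝ) ≤ (ε / 2) ^ 2 * p := by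
        have : (2 * M : ℝ) < r := by exact_mod_cast hrM
        nlinarith
      have hsqrt : √r ≤ ε / 2 * √p := by
        rw [← sqrt_sq (by positivity : 0 ≤ ε / 2), ← sqrt_mul (by positivity)]
        exact sqrt_le_sqrt hr2
      have hr0 : 0 < √r := sqrt_pos.mpr (by exact_mod_cast (Nat.zero_le _).trans_lt hrM)
      rw [zero_add, mul_one_div, div_le_div_iff₀ (sqrt_pos.mpr (by linarith)) hr0]
      linarith
  have hsmall : ∑ j ∈ range #P, (if j + 1 ≤ 2 * M then (1 : ℝ) else 0) ≤ 2 * M := by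
    rw [sum_boole]
    exact_mod_cast (card_le_card fun j hj ↦ by
      simp only [mem_filter, mem_range] at hj ⊢; omega).trans (card_range (2 * M)).le
  calc ∑ p ∈ P, 1 / √p ≤ ∑ p ∈ P, g #{q ∈ P | q ≤ p} := sum_le_sum hterm
    _ = ∑ j ∈ range #P, g (j + 1) := sum_apply_card_filter_le P g
    _ = ∑ j ∈ range #P, (if j + 1 ≤ 2 * M then (1 : ℝ) else 0)
        + ε / 2 * ∑ j ∈ range #P, 1 / √(j + 1) := by
      simp only [g, sum_add_distrib, mul_sum, Nat.cast_succ]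
    _ ≤ 2 * M + ε / 2 * (2 * √(#P : ℝ)) := by
      gcongr
      exact sum_range_inv_sqrt_succ_le _
    _ = ε * √(#P : ℝ) + 2 * M := by ring

open ArithmeticFunction in
theorem Nat.sum_divisors_prod_primeFactors_of_squarefree {R : Type*} [CommSemiring R]
    (f : ℕ → R) {q : ℕ} (hq : Squarefree q) :
    ∑ c ∈ q.divisors, ∏ p ∈ c.primeFactors, f p = ∏ p ∈ q.primeFactors, (1 + f p) := by
  have hmul := (IsMultiplicative.prodPrimeFactors f).prodPrimeFactors_one_add_of_squarefree hq
  calc ∑ c ∈ q.divisors, ∏ p ∈ c.primeFactors, f p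
      = ∑ c ∈ q.divisors, prodPrimeFactors f c :=
        sum_congr rfl fun c hc ↦ (prodPrimeFactors_apply (Nat.pos_of_mem_divisors hc).ne').symm
    _ = ∏ p ∈ q.primeFactors, (1 + f p) := by
        rw [← hmul]
        refine prod_congr rfl fun p hp ↦ ?_
        have hp := Nat.prime_of_mem_primeFactors hp
        rw [prodPrimeFactors_apply hp.ne_zero, hp.primeFactors, prod_singleton]

theorem pow_card_primeFactors_div_sqrt {c : ℕ} (hc : Squarefree c) (a : ℝ) :
    a ^ #c.primeFactors / √c = ∏ p ∈ c.primeFactors, a / √p := by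
  rw [prod_div_distrib, prod_const, ← sqrt_prod _ fun p _ ↦ Nat.cast_nonneg p, ← Nat.cast_prod,
    Nat.prod_primeFactors_of_squarefree hc]

theorem sum_divisors_pow_card_primeFactors_div_sqrt_le {q : ℕ} (hq : Squarefree q) {a : ℝ}
    (ha : 0 ≤ a) :
    ∑ c ∈ q.divisors, a ^ #c.primeFactors / √c ≤ exp (a * ∑ p ∈ q.primeFactors, 1 / √p) := by
  calc ∑ c ∈ q.divisors, a ^ #c.primeFactors / √c
      = ∑ c ∈ q.divisors, ∏ p ∈ c.primeFactors, a / √p :=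
        sum_congr rfl fun c hc ↦ pow_card_primeFactors_div_sqrt
          (hq.squarefree_of_dvd (Nat.dvd_of_mem_divisors hc)) a
    _ = ∏ p ∈ q.primeFactors, (1 + a / √p) := Nat.sum_divisors_prod_primeFactors_of_squarefree _ hq
    _ ≤ exp (∑ p ∈ q.primeFactors, a / √p) := prod_one_add_le_exp_sum _ fun p ↦ by positivity
    _ = exp (a * ∑ p ∈ q.primeFactors, 1 / √p) := by simp only [mul_sum, mul_one_div]

theorem ite_le_exp_neg_mul_exp_pow_mul {k x : ℝ} (hx : 0 ≤ x) (m : ℕ) :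
    (if k ≤ m then x else 0) ≤ exp (-k) * (exp 1 ^ m * x) := by
  split_ifs with h
  · rw [← exp_nat_mul, mul_one, ← mul_assoc, ← exp_add]
    exact le_mul_of_one_le_left hx (one_le_exp (by linarith))
  · positivity

theorem sum_divisors_many_prime_factors (K₁ : ℝ) (hK : 0 < K₁) :
    ∃ C : ℝ, 0 < C ∧ ∀ q : ℕ, Squarefree q →
      (∑ c ∈ q.divisors,
          if Real.sqrt (q.primeFactors.card : ℝ) ≤ (c.primeFactors.card : ℝ) then
            K₁ ^ c.primeFactors.card / Real.sqrt (c : ℝ)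
          else 0) ≤
        C * Real.exp (-C⁻¹ * Real.sqrt (q.primeFactors.card : ℝ)) := by
  set a := exp 1 * K₁
  have ha : 0 < a := by positivity
  obtain ⟨M, hM, hsum⟩ := exists_sum_inv_sqrt_prime_le (ε := 1 / (2 * a)) (by positivity)
  have hC : 2 ≤ 2 * exp (a * M) := by linarith [one_le_exp (by positivity : 0 ≤ a * M)]
  refine ⟨2 * exp (a * M), by positivity, fun q hq ↦ ?_⟩
  set k := √(#q.primeFactors : ℝ)
  have hprimes := hsum q.primeFactors fun p hp ↦ Nat.prime_of_mem_primeFactors hp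
  calc _ ≤ ∑ c ∈ q.divisors, exp (-k) * (exp 1 ^ #c.primeFactors * (K₁ ^ #c.primeFactors / √c)) :=
        sum_le_sum fun c _ ↦ ite_le_exp_neg_mul_exp_pow_mul (by positivity) _
    _ = exp (-k) * ∑ c ∈ q.divisors, a ^ #c.primeFactors / √c := by
        simp only [mul_sum, a, mul_pow, mul_div_assoc]
    _ ≤ exp (-k) * exp (a * (1 / (2 * a) * k + M)) := by
        gcongr
        exact (sum_divisors_pow_card_primeFactors_div_sqrt_le hq ha.le).trans
          (exp_le_exp.mpr (mul_le_mul_of_nonneg_left hprimes ha.le))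
    _ = exp (a * M) * exp (-(1 / 2) * k) := by
        rw [← exp_add, ← exp_add]
        congr 1
        field_simp
        ring
    _ ≤ 2 * exp (a * M) * exp (-(2 * exp (a * M))⁻¹ * k) := by
        gcongr
        · linarith
        · rw [one_div]
          exact inv_anti₀ two_pos hC
end

section
/- Let p be an odd prime, k ≥ 1, and h an integer. Let N(h,p^k) be the number of pairs (s₁,s₂) of squares in Z/p^kZ with s₂ − s₁ ≡ h (mod p^k). Then |N(h,p^k) − p^{k−1}·N(h,p)| ≤ C·p^{k−1} for an absolute constant C. -/
private lemma int_sq_lift (p : ℕ) (hp : p.Prime) (hp2 : p ≠ 2) (x b : ℤ)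
    (hxu : ¬ (p : ℤ) ∣ x) (hb : (p : ℤ) ∣ x - b ^ 2) :
    ∀ k : ℕ, ∃ c : ℤ, (p : ℤ) ^ (k + 1) ∣ x - c ^ 2 := by
  have hpI : Prime (p : ℤ) := Int.prime_iff_natAbs_prime.mpr (by simpa using hp)
  intro k
  induction k with
  | zero => exact ⟨b, by simpa using hb⟩
  | succ k ih =>
    obtain ⟨c, hc⟩ := ih
    have h1 : (p : ℤ) ∣ x - c ^ 2 := dvd_trans (dvd_pow_self _ (Nat.succ_ne_zero k)) hc
    have hpc : ¬ (p : ℤ) ∣ c := by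
      intro hdvd
      exact hxu (by
        have h2 : (p : ℤ) ∣ c ^ 2 := hdvd.pow two_ne_zero
        have := dvd_add h1 h2
        simpa using this)
    have hp2' : ¬ (p : ℤ) ∣ 2 := by
      intro hdvd
      have h3 : p ∣ 2 := by exact_mod_cast hdvd
      exact hp2 ((Nat.prime_dvd_prime_iff_eq hp Nat.prime_two).mp h3)
    have hcop : IsCoprime ((2 * c : ℤ)) ((p : ℤ)) := by
      refine (hpI.coprime_iff_not_dvd.mpr ?_).symm
      intro hdvd
      rcases hpI.dvd_mul.mp hdvd with h | h
      · exact hp2' h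
      · exact hpc h
    obtain ⟨u, v, huv⟩ := hcop
    obtain ⟨d, hd⟩ := hc
    refine ⟨c + d * u * (p : ℤ) ^ (k + 1), ⟨d * v - d ^ 2 * u ^ 2 * (p : ℤ) ^ k, ?_⟩⟩
    have hd' : x - c ^ 2 = (p : ℤ) ^ (k + 1) * d := hd
    linear_combination hd' - ((p : ℤ) ^ (k + 1) * d) * huv

private lemma card_comp_eq {α β : Type*} [Fintype α] [Fintype β] (f : α → β) (c : ℕ)
    (hc : ∀ y : β, Nat.card {x : α // f x = y} = c) (P : β → Prop) :
    Nat.card {x : α // P (f x)} = c * Nat.card {y : β // P y} := by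
  classical
  have e : {x : α // P (f x)} ≃ Σ y : {y : β // P y}, {x : α // f x = y.1} :=
    { toFun := fun x => ⟨⟨f x.1, x.2⟩, ⟨x.1, rfl⟩⟩
      invFun := fun z => ⟨z.2.1, by rw [z.2.2]; exact z.1.2⟩
      left_inv := fun x => rfl
      right_inv := fun z => by
        rcases z with ⟨⟨y, hy⟩, ⟨x, (hx : f x = y)⟩⟩
        subst hx
        rfl }
  rw [Nat.card_congr e, Nat.card_eq_fintype_card, Fintype.card_sigma]
  have hfib : ∀ y : {y : β // P y}, Fintype.card {x : α // f x = y.1} = c := fun y => by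
    rw [← Nat.card_eq_fintype_card]; exact hc y.1
  rw [Finset.sum_congr rfl (fun y _ => hfib y), Finset.sum_const, smul_eq_mul,
    Finset.card_univ, ← Nat.card_eq_fintype_card, mul_comm]

private lemma fiber_card {n m : ℕ} [NeZero n] [NeZero m] (hd : m ∣ n) (y : ZMod m) :
    Nat.card {x : ZMod n // ZMod.castHom hd (ZMod m) x = y} = n / m := by
  classical
  set f := ZMod.castHom hd (ZMod m) with hf
  have hsurj : Function.Surjective f := ZMod.ringHom_surjective f
  have key : ∀ y₁ y₂ : ZMod m,
      Nat.card {x : ZMod n // f x = y₁} = Nat.card {x : ZMod n // f x = y₂} := by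
    intro y₁ y₂
    obtain ⟨x₁, hx₁⟩ := hsurj y₁
    obtain ⟨x₂, hx₂⟩ := hsurj y₂
    exact Nat.card_congr
      ⟨fun x => ⟨x.1 - x₁ + x₂, by simp [map_add, map_sub, x.2, hx₁, hx₂]⟩,
       fun x => ⟨x.1 - x₂ + x₁, by simp [map_add, map_sub, x.2, hx₁, hx₂]⟩,
       fun x => Subtype.ext (by push_cast; ring),
       fun x => Subtype.ext (by push_cast; ring)⟩
  have htot : n = m * Nat.card {x : ZMod n // f x = y} := by
    have h1 : Fintype.card (ZMod n) = Fintype.card (Σ y' : ZMod m, {x : ZMod n // f x = y'}) :=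
      (Fintype.card_congr (Equiv.sigmaFiberEquiv f)).symm
    rw [ZMod.card] at h1
    rw [Fintype.card_sigma] at h1
    have h2 : ∀ y' : ZMod m, Fintype.card {x : ZMod n // f x = y'}
        = Nat.card {x : ZMod n // f x = y} := fun y' => by
      rw [← Nat.card_eq_fintype_card]; exact key y' y
    rw [Finset.sum_congr rfl (fun y' _ => h2 y'), Finset.sum_const, smul_eq_mul,
      Finset.card_univ, ZMod.card] at h1
    exact h1
  have hm : 0 < m := Nat.pos_of_ne_zero (NeZero.ne m)
  conv_rhs => rw [htot, Nat.mul_div_cancel_left _ hm]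

private lemma isUnit_cast_iff {p k : ℕ} (hp : p.Prime) (hk : k ≠ 0) (x : ZMod (p ^ k)) :
    IsUnit x ↔ IsUnit (ZMod.castHom (dvd_pow_self p hk) (ZMod p) x) := by
  haveI : NeZero (p ^ k) := ⟨pow_ne_zero _ hp.pos.ne'⟩
  haveI : NeZero p := ⟨hp.pos.ne'⟩
  have hx : ZMod.castHom (dvd_pow_self p hk) (ZMod p) x = ((x.val : ℕ) : ZMod p) := by
    conv_lhs => rw [← ZMod.natCast_zmod_val x]
    simp
  rw [hx]
  conv_lhs => rw [← ZMod.natCast_zmod_val x]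
  rw [ZMod.isUnit_iff_coprime, ZMod.isUnit_iff_coprime,
    Nat.coprime_pow_right_iff (Nat.pos_of_ne_zero hk)]

private lemma zmod_sq_lift {p k : ℕ} (hp : p.Prime) (hp2 : p ≠ 2) (hk : k ≠ 0)
    (x : ZMod (p ^ k)) (hu : IsUnit x) (a : ZMod p)
    (ha : a ^ 2 = ZMod.castHom (dvd_pow_self p hk) (ZMod p) x) :
    ∃ b : ZMod (p ^ k), b ^ 2 = x := by
  haveI : NeZero (p ^ k) := ⟨pow_ne_zero _ hp.pos.ne'⟩
  haveI : NeZero p := ⟨hp.pos.ne'⟩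
  haveI : Fact p.Prime := ⟨hp⟩
  set X : ℤ := (x.val : ℤ) with hX
  set A : ℤ := (a.val : ℤ) with hA
  have hfx : ZMod.castHom (dvd_pow_self p hk) (ZMod p) x = ((x.val : ℕ) : ZMod p) := by
    conv_lhs => rw [← ZMod.natCast_zmod_val x]
    simp
  have hnd : ¬ (p : ℤ) ∣ X := by
    intro hdvd
    have h0 : ((x.val : ℕ) : ZMod p) = 0 := by
      rw [ZMod.natCast_eq_zero_iff]
      exact_mod_cast show ((p : ℤ)) ∣ ((x.val : ℕ) : ℤ) from hdvd
    have hU : IsUnit (ZMod.castHom (dvd_pow_self p hk) (ZMod p) x) := hu.map _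
    rw [hfx, h0] at hU
    exact hU.ne_zero rfl
  have hdvd1 : (p : ℤ) ∣ X - A ^ 2 := by
    rw [← ZMod.intCast_zmod_eq_zero_iff_dvd, hX, hA]
    push_cast
    rw [ZMod.natCast_zmod_val a, ← hfx, ← ha, sub_self]
  obtain ⟨c, hc⟩ := int_sq_lift p hp hp2 X A hnd hdvd1 (k - 1)
  rw [Nat.sub_add_cancel (Nat.one_le_iff_ne_zero.mpr hk)] at hc
  refine ⟨(c : ZMod (p ^ k)), ?_⟩
  have h0 : ((X - c ^ 2 : ℤ) : ZMod (p ^ k)) = 0 := by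
    rw [ZMod.intCast_zmod_eq_zero_iff_dvd]
    exact_mod_cast hc
  rw [hX] at h0
  push_cast at h0
  rw [ZMod.natCast_zmod_val x] at h0
  exact (sub_eq_zero.mp h0).symm

private lemma pair_count_eq (n : ℕ) (h : ℤ) :
    Nat.card {s : ZMod n × ZMod n //
        (∃ a : ZMod n, a ^ 2 = s.1) ∧ (∃ b : ZMod n, b ^ 2 = s.2) ∧
          s.2 - s.1 = (h : ZMod n)}
      = Nat.card {x : ZMod n //
          (∃ a : ZMod n, a ^ 2 = x) ∧ (∃ b : ZMod n, b ^ 2 = x + (h : ZMod n))} := by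
  refine Nat.card_congr
    { toFun := fun s => ⟨s.1.1, s.2.1, by
        rw [← sub_eq_iff_eq_add'.mp s.2.2.2]
        exact s.2.2.1⟩
      invFun := fun x => ⟨(x.1, x.1 + (h : ZMod n)), x.2.1, x.2.2, add_sub_cancel_left x.1 _⟩
      left_inv := fun s => Subtype.ext (Prod.ext rfl (sub_eq_iff_eq_add'.mp s.2.2.2).symm)
      right_inv := fun x => rfl }

theorem pair_correlation_prime_power_lift :
    ∃ C : ℝ, 0 < C ∧ ∀ (p k : ℕ) (h : ℤ), p.Prime → p ≠ 2 → 1 ≤ k →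
      |(Nat.card {s : ZMod (p ^ k) × ZMod (p ^ k) //
            (∃ a : ZMod (p ^ k), a ^ 2 = s.1) ∧ (∃ b : ZMod (p ^ k), b ^ 2 = s.2) ∧
              s.2 - s.1 = (h : ZMod (p ^ k))} : ℝ) -
          (p : ℝ) ^ (k - 1) *
            (Nat.card {s : ZMod p × ZMod p //
              (∃ a : ZMod p, a ^ 2 = s.1) ∧ (∃ b : ZMod p, b ^ 2 = s.2) ∧
                s.2 - s.1 = (h : ZMod p)} : ℝ)| ≤
        C * (p : ℝ) ^ (k - 1) := by
  refine ⟨4, by norm_num, ?_⟩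
  intro p k h hp hp2 hk
  haveI : Fact p.Prime := ⟨hp⟩
  haveI : NeZero p := ⟨hp.pos.ne'⟩
  haveI : NeZero (p ^ k) := ⟨pow_ne_zero _ hp.pos.ne'⟩
  have hk0 : k ≠ 0 := by omega
  set f := ZMod.castHom (dvd_pow_self p hk0) (ZMod p) with hfdef
  set Ap : Set (ZMod p) :=
    {y | (∃ a : ZMod p, a ^ 2 = y) ∧ (∃ b : ZMod p, b ^ 2 = y + (h : ZMod p))} with hApdef
  set Gp : Set (ZMod p) :=
    {y | IsUnit y ∧ IsUnit (y + (h : ZMod p)) ∧ y ∈ Ap} with hGpdef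
  set A : Set (ZMod (p ^ k)) :=
    {x | (∃ a : ZMod (p ^ k), a ^ 2 = x) ∧
      (∃ b : ZMod (p ^ k), b ^ 2 = x + (h : ZMod (p ^ k)))} with hAdef
  set G : Set (ZMod (p ^ k)) := f ⁻¹' Gp with hGdef
  have hfh : f ((h : ℤ) : ZMod (p ^ k)) = ((h : ℤ) : ZMod p) := map_intCast f h
  -- G ⊆ A
  have hGA : G ⊆ A := by
    intro x hx
    obtain ⟨hu1, hu2, hsq1, hsq2⟩ := hx
    have hux : IsUnit x := (isUnit_cast_iff hp hk0 x).mpr hu1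
    have huxh : IsUnit (x + (h : ZMod (p ^ k))) := by
      refine (isUnit_cast_iff hp hk0 _).mpr ?_
      rw [map_add, hfh]
      exact hu2
    obtain ⟨a, ha⟩ := hsq1
    obtain ⟨b, hb⟩ := hsq2
    refine ⟨zmod_sq_lift hp hp2 hk0 x hux a ha, ?_⟩
    refine zmod_sq_lift hp hp2 hk0 _ huxh b ?_
    rw [map_add, hfh]
    exact hb
  -- A \ G is contained in two fibers
  have hAG : A \ G ⊆ {x | f x = 0} ∪ {x | f x = -((h : ℤ) : ZMod p)} := by
    rintro x ⟨hxA, hxG⟩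
    by_contra hcon
    simp only [Set.mem_union, Set.mem_setOf_eq] at hcon
    push_neg at hcon
    obtain ⟨hc1, hc2⟩ := hcon
    refine hxG ?_
    obtain ⟨⟨a, ha⟩, ⟨b, hb⟩⟩ := hxA
    refine ⟨isUnit_iff_ne_zero.mpr hc1, isUnit_iff_ne_zero.mpr ?_, ⟨f a, ?_⟩, ⟨f b, ?_⟩⟩
    · intro h0
      exact hc2 (eq_neg_of_add_eq_zero_left h0)
    · rw [← map_pow, ha]
    · rw [← map_pow, hb, map_add, hfh]
  -- fibers of f
  have hfiber : ∀ y : ZMod p, Nat.card {x : ZMod (p ^ k) // f x = y} = p ^ (k - 1) := by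
    intro y
    rw [hfdef, fiber_card (dvd_pow_self p hk0) y]
    have h3 : p ^ k / p ^ 1 = p ^ (k - 1) := Nat.pow_div hk hp.pos
    simpa using h3
  have hfibset : ∀ y : ZMod p, ({x : ZMod (p ^ k) | f x = y}).ncard = p ^ (k - 1) := by
    intro y
    rw [← Nat.card_coe_set_eq]
    exact hfiber y
  -- G count
  have hG : G.ncard = p ^ (k - 1) * Gp.ncard := by
    rw [← Nat.card_coe_set_eq, ← Nat.card_coe_set_eq]
    exact card_comp_eq f _ hfiber (· ∈ Gp)
  -- counting bounds mod p^k
  have n0 : (A \ G).ncard + G.ncard = A.ncard := Set.ncard_diff_add_ncard_of_subset hGA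
  have n1 : A.ncard ≤ G.ncard + 2 * p ^ (k - 1) := by
    have h1 : (A \ G).ncard ≤ ({x : ZMod (p ^ k) | f x = 0}
        ∪ {x : ZMod (p ^ k) | f x = -((h : ℤ) : ZMod p)}).ncard :=
      Set.ncard_le_ncard hAG (Set.toFinite _)
    have h2 := Set.ncard_union_le {x : ZMod (p ^ k) | f x = 0}
      {x : ZMod (p ^ k) | f x = -((h : ℤ) : ZMod p)}
    rw [hfibset 0, hfibset (-((h : ℤ) : ZMod p))] at h2
    omega
  have n2 : G.ncard ≤ A.ncard := Set.ncard_le_ncard hGA (Set.toFinite _)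
  -- counting bounds mod p
  have hGpAp : Gp ⊆ Ap := fun y hy => hy.2.2
  have hApGp : Ap \ Gp ⊆ ({0} : Set (ZMod p)) ∪ {-((h : ℤ) : ZMod p)} := by
    rintro y ⟨hyA, hyG⟩
    by_contra hcon
    simp only [Set.mem_union, Set.mem_singleton_iff] at hcon
    push_neg at hcon
    obtain ⟨hc1, hc2⟩ := hcon
    refine hyG ⟨isUnit_iff_ne_zero.mpr hc1, isUnit_iff_ne_zero.mpr ?_, hyA⟩
    intro h0
    exact hc2 (eq_neg_of_add_eq_zero_left h0)
  have m0 : (Ap \ Gp).ncard + Gp.ncard = Ap.ncard := Set.ncard_diff_add_ncard_of_subset hGpAp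
  have m1 : Ap.ncard ≤ Gp.ncard + 2 := by
    have h1 : (Ap \ Gp).ncard ≤ (({0} : Set (ZMod p)) ∪ {-((h : ℤ) : ZMod p)}).ncard :=
      Set.ncard_le_ncard hApGp (Set.toFinite _)
    have h2 := Set.ncard_union_le ({0} : Set (ZMod p)) {-((h : ℤ) : ZMod p)}
    rw [Set.ncard_singleton, Set.ncard_singleton] at h2
    omega
  have m2 : Gp.ncard ≤ Ap.ncard := Set.ncard_le_ncard hGpAp (Set.toFinite _)
  -- convert pair counts
  have e1 : (Nat.card {s : ZMod (p ^ k) × ZMod (p ^ k) //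
      (∃ a : ZMod (p ^ k), a ^ 2 = s.1) ∧ (∃ b : ZMod (p ^ k), b ^ 2 = s.2) ∧
        s.2 - s.1 = (h : ZMod (p ^ k))}) = A.ncard := by
    rw [pair_count_eq (p ^ k) h, ← Nat.card_coe_set_eq]
    rfl
  have e2 : (Nat.card {s : ZMod p × ZMod p //
      (∃ a : ZMod p, a ^ 2 = s.1) ∧ (∃ b : ZMod p, b ^ 2 = s.2) ∧
        s.2 - s.1 = (h : ZMod p)}) = Ap.ncard := by
    rw [pair_count_eq p h, ← Nat.card_coe_set_eq]
    rfl
  rw [e1, e2]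
  -- real arithmetic
  have hP0 : (0 : ℝ) ≤ (p : ℝ) ^ (k - 1) := pow_nonneg (by positivity) _
  have cg : (G.ncard : ℝ) = (p : ℝ) ^ (k - 1) * (Gp.ncard : ℝ) := by
    rw [hG]; push_cast; ring
  have c1 : (A.ncard : ℝ) ≤ (G.ncard : ℝ) + 2 * (p : ℝ) ^ (k - 1) := by
    exact_mod_cast n1
  have c2 : (G.ncard : ℝ) ≤ (A.ncard : ℝ) := by exact_mod_cast n2
  have c3 : (Ap.ncard : ℝ) ≤ (Gp.ncard : ℝ) + 2 := by exact_mod_cast m1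
  have c4 : (Gp.ncard : ℝ) ≤ (Ap.ncard : ℝ) := by exact_mod_cast m2
  have hint1 : (0 : ℝ) ≤ (p : ℝ) ^ (k - 1) * ((Ap.ncard : ℝ) - (Gp.ncard : ℝ)) :=
    mul_nonneg hP0 (by linarith)
  have hint2 : (0 : ℝ) ≤ (p : ℝ) ^ (k - 1) * ((Gp.ncard : ℝ) + 2 - (Ap.ncard : ℝ)) :=
    mul_nonneg hP0 (by linarith)
  rw [abs_le]
  constructor <;> nlinarith [hint1, hint2, c1, c2, c3, c4, cg, hP0]
end
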